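/- arXiv:1708.07849 — 4 statements merged into one kernel-verified Lean document; each statement's English description precedes it below -/
import Mathlib

section
/- Let A be a 2×2 real matrix and B an invertible n×n real matrix, and define T : ℝ^{2×n} → ℝ^{2×n} by T(X) = AXB. If ν is a homogeneous gradient Young measure on ℝ^{2×n}, then the pushforward measure T_#ν is a homogeneous gradient Young measure. -/
open MeasureTheory

noncomputable section

instance matrixMeasurableSpace {m n : ℕ} : MeasurableSpace (Matrix (Fin m) (Fin n) ℝ) :=
  show MeasurableSpace (Fin m → Fin n → ℝ) from inferInstance

/-- The Jacobian matrix of `φ : ℝⁿ → ℝᵐ` at `x`. -/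
def jacobianM (m n : ℕ) (φ : (Fin n → ℝ) → (Fin m → ℝ)) (x : Fin n → ℝ) :
    Matrix (Fin m) (Fin n) ℝ :=
  Matrix.of fun i j => fderiv ℝ φ x (Pi.single j 1) i

/-- `f : ℝ^{m×n} → ℝ` is quasiconvex: `f` is Borel measurable, locally bounded, and for every
nonempty bounded open `Ω ⊆ ℝⁿ`, every `X₀` and every smooth `φ` compactly supported in `Ω`,
`f X₀ * |Ω| ≤ ∫_Ω f (X₀ + Dφ x) dx`. -/
def IsQuasiconvex {m n : ℕ} (f : Matrix (Fin m) (Fin n) ℝ → ℝ) : Prop :=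
  Measurable f ∧
  (∀ K : Set (Matrix (Fin m) (Fin n) ℝ), IsCompact K → ∃ C : ℝ, ∀ X ∈ K, |f X| ≤ C) ∧
  ∀ Ω : Set (Fin n → ℝ), IsOpen Ω → Ω.Nonempty → Bornology.IsBounded Ω →
    ∀ (X₀ : Matrix (Fin m) (Fin n) ℝ) (φ : (Fin n → ℝ) → (Fin m → ℝ)),
      ContDiff ℝ (⊤ : ℕ∞) φ → HasCompactSupport φ → tsupport φ ⊆ Ω →
      f X₀ * (volume Ω).toReal ≤ ∫ x in Ω, f (X₀ + jacobianM m n φ x)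

/-- `f : ℝ^{m×n} → ℝ` is rank-one convex. -/
def IsRankOneConvex {m n : ℕ} (f : Matrix (Fin m) (Fin n) ℝ → ℝ) : Prop :=
  ∀ X Y : Matrix (Fin m) (Fin n) ℝ, (X - Y).rank ≤ 1 →
    ∀ t : ℝ, t ∈ Set.Icc (0 : ℝ) 1 →
      f (t • X + (1 - t) • Y) ≤ t * f X + (1 - t) * f Y

/-- The barycentre `μ̄ = ∫ X dμ(X)`, computed entrywise. -/
def matBarycenter {m n : ℕ} (μ : Measure (Matrix (Fin m) (Fin n) ℝ)) :
    Matrix (Fin m) (Fin n) ℝ :=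
  Matrix.of fun i j => ∫ X, X i j ∂μ

/-- `M^{2×n}_tri`: second row is `(0, …, 0, a)`. -/
def Mtri (n : ℕ) : Set (Matrix (Fin 2) (Fin n) ℝ) :=
  {X | ∀ j : Fin n, (j : ℕ) + 1 < n → X 1 j = 0}

/-- `M^{2×n}_diag`: first row `(a₁, …, a_{n-1}, 0)`, second row `(0, …, 0, b)`. -/
def Mdiag (n : ℕ) : Set (Matrix (Fin 2) (Fin n) ℝ) :=
  {X | (∀ j : Fin n, (j : ℕ) + 1 < n → X 1 j = 0) ∧
       (∀ j : Fin n, (j : ℕ) + 1 = n → X 0 j = 0)}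

/-- The orthogonal projection of `ℝ^{2×n}` onto `M^{2×n}_diag`. -/
def Pdiag (n : ℕ) (X : Matrix (Fin 2) (Fin n) ℝ) : Matrix (Fin 2) (Fin n) ℝ :=
  Matrix.of fun i j =>
    if i = 0 then (if (j : ℕ) + 1 < n then X 0 j else 0)
    else (if (j : ℕ) + 1 = n then X 1 j else 0)

/-- A homogeneous gradient Young measure: a compactly supported Borel probability measure
satisfying Jensen's inequality for all quasiconvex functions. -/
def IsHomogeneousGradientYoungMeasure {m n : ℕ}
    (μ : Measure (Matrix (Fin m) (Fin n) ℝ)) : Prop :=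
  IsProbabilityMeasure μ ∧ (∃ K, IsCompact K ∧ μ Kᶜ = 0) ∧
  ∀ f : Matrix (Fin m) (Fin n) ℝ → ℝ, IsQuasiconvex f →
    f (matBarycenter μ) ≤ ∫ X, f X ∂μ

/-- A laminate: a compactly supported Borel probability measure
satisfying Jensen's inequality for all rank-one convex functions. -/
def IsLaminate {m n : ℕ} (μ : Measure (Matrix (Fin m) (Fin n) ℝ)) : Prop :=
  IsProbabilityMeasure μ ∧ (∃ K, IsCompact K ∧ μ Kᶜ = 0) ∧
  ∀ f : Matrix (Fin m) (Fin n) ℝ → ℝ, IsRankOneConvex f →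
    f (matBarycenter μ) ≤ ∫ X, f X ∂μ

/-- `M^{2×2}_+ = {X : X₁₂ > 0}`. -/
def Mplus : Set (Matrix (Fin 2) (Fin 2) ℝ) := {X | 0 < X 0 1}

/-- The partial Legendre transform `Ψ`. -/
def Psi (X : Matrix (Fin 2) (Fin 2) ℝ) : Matrix (Fin 2) (Fin 2) ℝ :=
  (X 0 1)⁻¹ • !![-(X 0 0), 1; -X.det, X 1 1]

/-- The dual function `h̃(X) = X₁₂ · h(Ψ(X))`. -/
def dualFn (h : Matrix (Fin 2) (Fin 2) ℝ → ℝ) (X : Matrix (Fin 2) (Fin 2) ℝ) : ℝ :=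
  X 0 1 * h (Psi X)

/-- The dual measure `μ̃`, characterised by
`∫ f dμ̃ = (1/μ̄₁₂) ∫ X₁₂ · f(Ψ(X)) dμ(X)` for all Borel `f : M → [0,∞]`. -/
def dualMeasure (μ : Measure (Matrix (Fin 2) (Fin 2) ℝ)) :
    Measure (Matrix (Fin 2) (Fin 2) ℝ) :=
  Measure.map Psi
    ((ENNReal.ofReal (matBarycenter μ 0 1))⁻¹ •
      μ.withDensity fun X => ENNReal.ofReal (X 0 1))

/-- The (topological) support of a measure. -/
def mSupport {α : Type*} [TopologicalSpace α] [MeasurableSpace α] (μ : Measure α) : Set α :=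
  {x | ∀ U : Set α, IsOpen U → x ∈ U → μ U ≠ 0}

/-- `f` is quasiconvex on the open set `U ⊆ ℝ^{2×2}`. -/
def IsQuasiconvexOn (U : Set (Matrix (Fin 2) (Fin 2) ℝ))
    (f : Matrix (Fin 2) (Fin 2) ℝ → ℝ) : Prop :=
  ∀ Ω : Set (Fin 2 → ℝ), IsOpen Ω → Ω.Nonempty → Bornology.IsBounded Ω →
    ∀ (A : Matrix (Fin 2) (Fin 2) ℝ) (φ : (Fin 2 → ℝ) → (Fin 2 → ℝ)),
      ContDiff ℝ (⊤ : ℕ∞) φ → HasCompactSupport φ → tsupport φ ⊆ Ω →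
      (∀ x, A + jacobianM 2 2 φ x ∈ U) →
      f A * (volume Ω).toReal ≤ ∫ x in Ω, f (A + jacobianM 2 2 φ x)

/-- `f` is rank-one convex on the open convex set `U ⊆ ℝ^{2×2}`. -/
def IsRankOneConvexOn (U : Set (Matrix (Fin 2) (Fin 2) ℝ))
    (f : Matrix (Fin 2) (Fin 2) ℝ → ℝ) : Prop :=
  ∀ X ∈ U, ∀ Y ∈ U, (X - Y).rank ≤ 1 →
    ∀ t : ℝ, t ∈ Set.Icc (0 : ℝ) 1 →
      f (t • X + (1 - t) • Y) ≤ t * f X + (1 - t) * f Y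


/-!
Since `X ↦ A X B` is linear it commutes with the barycentre, so Jensen's inequality for the
pushforward against a quasiconvex `f` is Jensen's inequality for `ν` against `X ↦ f (A X B)`.
That function is again quasiconvex: for `X ↦ f (A X)` test `f` with `Aφ` on the same domain `Ω`;
for `X ↦ f (X B)` test `f` with `φ ∘ B` on `B⁻¹Ω`, where the linear change of variables scales
both sides of the defining inequality by `|det B|⁻¹`.
-/

instance matrixBorelSpace {m n : ℕ} : BorelSpace (Matrix (Fin m) (Fin n) ℝ) :=
  show BorelSpace (Fin m → Fin n → ℝ) from inferInstance

theorem Continuous.integrable_of_measure_compl_eq_zero {α : Type*} [TopologicalSpace α]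
    [T2Space α] [MeasurableSpace α] [OpensMeasurableSpace α] {μ : Measure α} [IsFiniteMeasure μ]
    {K : Set α} (hK : IsCompact K) (hKc : μ Kᶜ = 0) {g : α → ℝ} (hg : Continuous g) :
    Integrable g μ := by
  rw [← Measure.restrict_eq_self_of_ae_mem (mem_ae_iff.mpr hKc)]
  exact hg.continuousOn.integrableOn_compact hK

theorem matBarycenter_map_mul_mul {m n p q : ℕ} (A : Matrix (Fin p) (Fin m) ℝ)
    (B : Matrix (Fin n) (Fin q) ℝ) {ν : Measure (Matrix (Fin m) (Fin n) ℝ)}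
    (hν : ∀ i j, Integrable (fun X => X i j) ν) :
    matBarycenter (ν.map fun X => A * X * B) = A * matBarycenter ν * B := by
  ext i j
  have hT : Continuous fun X : Matrix (Fin m) (Fin n) ℝ => A * X * B := by fun_prop
  have hrow : ∀ c, Integrable (fun X : Matrix (Fin m) (Fin n) ℝ => ∑ k, A i k * X k c) ν :=
    fun c => integrable_finsetSum _ fun k _ => (hν k c).const_mul _
  simp only [matBarycenter, Matrix.of_apply]
  rw [integral_map hT.aemeasurable (continuous_apply_apply i j).aestronglyMeasurable]
  simp only [Matrix.mul_apply, Matrix.of_apply]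
  rw [integral_finsetSum _ fun c _ => (hrow c).mul_const _]
  refine Finset.sum_congr rfl fun c _ => ?_
  rw [integral_mul_const, integral_finsetSum _ fun k _ => (hν k c).const_mul _]
  simp only [integral_const_mul]

theorem jacobianM_eq_toMatrix' {m n : ℕ} (φ : (Fin n → ℝ) → (Fin m → ℝ)) (x : Fin n → ℝ) :
    jacobianM m n φ x = LinearMap.toMatrix' (fderiv ℝ φ x : (Fin n → ℝ) →ₗ[ℝ] (Fin m → ℝ)) := by
  ext i j
  rfl

theorem jacobianM_continuousLinearMap_comp {m n p : ℕ} (L : (Fin m → ℝ) →L[ℝ] (Fin p → ℝ))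
    {φ : (Fin n → ℝ) → (Fin m → ℝ)} {x : Fin n → ℝ} (hφ : DifferentiableAt ℝ φ x) :
    jacobianM p n (L ∘ φ) x = LinearMap.toMatrix' (L : (Fin m → ℝ) →ₗ[ℝ] (Fin p → ℝ)) *
      jacobianM m n φ x := by
  rw [jacobianM_eq_toMatrix', jacobianM_eq_toMatrix', (L.hasFDerivAt.comp x hφ.hasFDerivAt).fderiv,
    ContinuousLinearMap.toLinearMap_comp, LinearMap.toMatrix'_comp]

theorem jacobianM_comp_continuousLinearMap {m n k : ℕ} (L : (Fin k → ℝ) →L[ℝ] (Fin n → ℝ))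
    {φ : (Fin n → ℝ) → (Fin m → ℝ)} {y : Fin k → ℝ} (hφ : DifferentiableAt ℝ φ (L y)) :
    jacobianM m k (φ ∘ L) y = jacobianM m n φ (L y) *
      LinearMap.toMatrix' (L : (Fin k → ℝ) →ₗ[ℝ] (Fin n → ℝ)) := by
  rw [jacobianM_eq_toMatrix', jacobianM_eq_toMatrix', (hφ.hasFDerivAt.comp y L.hasFDerivAt).fderiv,
    ContinuousLinearMap.toLinearMap_comp, LinearMap.toMatrix'_comp]

theorem MeasureTheory.Measure.setIntegral_comp_preimage_linearMap {E F : Type*}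
    [NormedAddCommGroup E] [NormedSpace ℝ E] [MeasurableSpace E] [BorelSpace E]
    [FiniteDimensional ℝ E] [NormedAddCommGroup F] [NormedSpace ℝ F]
    (μ : Measure E) [μ.IsAddHaarMeasure] {L : E →ₗ[ℝ] E} (hL : LinearMap.det L ≠ 0)
    (g : E → F) (s : Set E) :
    ∫ y in L ⁻¹' s, g (L y) ∂μ = |(LinearMap.det L)⁻¹| • ∫ x in s, g x ∂μ := by
  have hemb : MeasurableEmbedding L :=
    (L.equivOfDetNeZero hL).toContinuousLinearEquiv.toHomeomorph.measurableEmbedding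
  rw [← hemb.setIntegral_map, map_linearMap_addHaar_eq_smul_addHaar μ hL, Measure.restrict_smul,
    integral_smul_measure, ENNReal.toReal_ofReal (abs_nonneg _)]

theorem IsQuasiconvex.comp_mul_left {m n p : ℕ} {f : Matrix (Fin p) (Fin n) ℝ → ℝ}
    (hf : IsQuasiconvex f) (A : Matrix (Fin p) (Fin m) ℝ) :
    IsQuasiconvex fun X : Matrix (Fin m) (Fin n) ℝ => f (A * X) := by
  obtain ⟨hf_meas, hf_bdd, hf_jensen⟩ := hf
  have hT : Continuous fun X : Matrix (Fin m) (Fin n) ℝ => A * X := by fun_prop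
  refine ⟨hf_meas.comp hT.measurable, fun K hK => ?_, ?_⟩
  · exact (hf_bdd _ (hK.image hT)).imp fun C hC X hX => hC _ (Set.mem_image_of_mem _ hX)
  intro Ω hΩo hΩne hΩb X₀ φ hφ hφcs hφΩ
  set L := LinearMap.toContinuousLinearMap (Matrix.toLin' A)
  have hjac : ∀ x, jacobianM p n (L ∘ φ) x = A * jacobianM m n φ x := fun x => by
    rw [jacobianM_continuousLinearMap_comp L ((hφ.differentiable (by simp)) x),
      LinearMap.coe_toContinuousLinearMap, LinearMap.toMatrix'_toLin']
  calc f (A * X₀) * (volume Ω).toReal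
      ≤ ∫ x in Ω, f (A * X₀ + jacobianM p n (L ∘ φ) x) :=
        hf_jensen Ω hΩo hΩne hΩb _ _ (L.contDiff.comp hφ) (hφcs.comp_left (map_zero L))
          ((tsupport_comp_subset (map_zero L) φ).trans hφΩ)
    _ = ∫ x in Ω, f (A * (X₀ + jacobianM m n φ x)) := by simp_rw [hjac, Matrix.mul_add]

theorem IsQuasiconvex.comp_mul_right {m n : ℕ} {f : Matrix (Fin m) (Fin n) ℝ → ℝ}
    (hf : IsQuasiconvex f) {B : Matrix (Fin n) (Fin n) ℝ} (hB : IsUnit B) :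
    IsQuasiconvex fun X : Matrix (Fin m) (Fin n) ℝ => f (X * B) := by
  obtain ⟨hf_meas, hf_bdd, hf_jensen⟩ := hf
  have hT : Continuous fun X : Matrix (Fin m) (Fin n) ℝ => X * B := by fun_prop
  refine ⟨hf_meas.comp hT.measurable, fun K hK => ?_, ?_⟩
  · exact (hf_bdd _ (hK.image hT)).imp fun C hC X hX => hC _ (Set.mem_image_of_mem _ hX)
  intro Ω hΩo hΩne hΩb X₀ φ hφ hφcs hφΩ
  set L := Matrix.toLin' B
  have hdet : LinearMap.det L ≠ 0 := by
    rw [LinearMap.det_toLin']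
    exact ((Matrix.isUnit_iff_isUnit_det B).mp hB).ne_zero
  set e := (L.equivOfDetNeZero hdet).toContinuousLinearEquiv
  set c := |(LinearMap.det L)⁻¹|
  have hc : 0 < c := abs_pos.mpr (inv_ne_zero hdet)
  have hjac : ∀ y, jacobianM m n (φ ∘ e) y = jacobianM m n φ (e y) * B := fun y =>
    (jacobianM_comp_continuousLinearMap (e : (Fin n → ℝ) →L[ℝ] (Fin n → ℝ))
      ((hφ.differentiable (by simp)) _)).trans (congrArg _ (LinearMap.toMatrix'_toLin' B))
  have hjensen := hf_jensen (e ⁻¹' Ω) (hΩo.preimage e.continuous) (hΩne.preimage e.surjective)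
    (e.antilipschitz.isBounded_preimage hΩb) (X₀ * B) (φ ∘ e) (hφ.comp e.contDiff)
    (hφcs.comp_homeomorph e.toHomeomorph)
    ((tsupport_comp_eq_preimage φ e.toHomeomorph).trans_subset (Set.preimage_mono hφΩ))
  have hvol : (volume (e ⁻¹' Ω)).toReal = c * (volume Ω).toReal := by
    rw [show ⇑e = ⇑L from rfl, Measure.addHaar_preimage_linearMap _ hdet, ENNReal.toReal_mul,
      ENNReal.toReal_ofReal (abs_nonneg _)]
  have hint : ∫ y in e ⁻¹' Ω, f (X₀ * B + jacobianM m n (φ ∘ e) y)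
      = c * ∫ x in Ω, f ((X₀ + jacobianM m n φ x) * B) := by
    simp_rw [hjac, ← Matrix.add_mul]
    exact Measure.setIntegral_comp_preimage_linearMap volume hdet
      (fun x => f ((X₀ + jacobianM m n φ x) * B)) Ω
  rw [hvol, hint, mul_left_comm] at hjensen
  exact le_of_mul_le_mul_left hjensen hc

theorem IsQuasiconvex.comp_mul_mul {m n p : ℕ} {f : Matrix (Fin p) (Fin n) ℝ → ℝ}
    (hf : IsQuasiconvex f) (A : Matrix (Fin p) (Fin m) ℝ) {B : Matrix (Fin n) (Fin n) ℝ}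
    (hB : IsUnit B) : IsQuasiconvex fun X : Matrix (Fin m) (Fin n) ℝ => f (A * X * B) :=
  (hf.comp_mul_right hB).comp_mul_left A

theorem IsHomogeneousGradientYoungMeasure.integrable_apply {m n : ℕ}
    {ν : Measure (Matrix (Fin m) (Fin n) ℝ)} (hν : IsHomogeneousGradientYoungMeasure ν)
    (i : Fin m) (j : Fin n) : Integrable (fun X => X i j) ν := by
  obtain ⟨hprob, ⟨K, hK, hKc⟩, -⟩ := hν
  exact (continuous_apply_apply i j).integrable_of_measure_compl_eq_zero hK hKc

theorem IsHomogeneousGradientYoungMeasure.map {m n p q : ℕ}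
    {ν : Measure (Matrix (Fin m) (Fin n) ℝ)} (hν : IsHomogeneousGradientYoungMeasure ν)
    {T : Matrix (Fin m) (Fin n) ℝ → Matrix (Fin p) (Fin q) ℝ} (hT : Continuous T)
    (hbar : matBarycenter (ν.map T) = T (matBarycenter ν))
    (hqc : ∀ f, IsQuasiconvex f → IsQuasiconvex (f ∘ T)) :
    IsHomogeneousGradientYoungMeasure (ν.map T) := by
  obtain ⟨hprob, ⟨K, hK, hKc⟩, hjensen⟩ := hν
  refine ⟨Measure.isProbabilityMeasure_map hT.aemeasurable,
    ⟨T '' K, hK.image hT, ?_⟩, fun f hf => ?_⟩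
  · rw [Measure.map_apply hT.measurable (hK.image hT).isClosed.measurableSet.compl]
    exact measure_mono_null (fun X hX hXK => hX (Set.mem_image_of_mem T hXK)) hKc
  · rw [hbar, integral_map hT.aemeasurable hf.1.aestronglyMeasurable]
    exact hjensen _ (hqc f hf)

theorem pushforward_mul_left_right_hgym_general (n : ℕ)
    (A : Matrix (Fin 2) (Fin 2) ℝ) (B : Matrix (Fin n) (Fin n) ℝ) (hB : IsUnit B)
    (ν : Measure (Matrix (Fin 2) (Fin n) ℝ))
    (hν : IsHomogeneousGradientYoungMeasure ν) :
    IsHomogeneousGradientYoungMeasure (ν.map fun X : Matrix (Fin 2) (Fin n) ℝ => A * X * B) :=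
  hν.map (by fun_prop) (matBarycenter_map_mul_mul A B hν.integrable_apply)
    fun _ hf => hf.comp_mul_mul A hB

/-- If `ν` is a homogeneous gradient Young measure, so is its pushforward by `X ↦ AXB`,
for `A ∈ ℝ^{2×2}` and `B ∈ ℝ^{n×n}` invertible. -/
theorem pushforward_mul_left_right_hgym (n : ℕ) (hn : 2 ≤ n)
    (A : Matrix (Fin 2) (Fin 2) ℝ) (B : Matrix (Fin n) (Fin n) ℝ) (hB : IsUnit B)
    (ν : Measure (Matrix (Fin 2) (Fin n) ℝ))
    (hν : IsHomogeneousGradientYoungMeasure ν) :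
    IsHomogeneousGradientYoungMeasure (ν.map fun X : Matrix (Fin 2) (Fin n) ℝ => A * X * B) :=
  pushforward_mul_left_right_hgym_general n A B hB ν hν

end
end

section
/- If μ is a finite convex combination of Dirac measures on ℝ^{2×n} with support contained in M^{2×n}_tri, and the pushforward P_#μ of μ by the projection P onto M^{2×n}_diag is a prelaminate, then μ is a prelaminate. -/
open MeasureTheory

noncomputable section

/-- The `H_l` condition on a finite list of weighted matrices: a list of length 2 satisfies it
iff the two matrices differ by a matrix of rank at most one; a longer list satisfies it iff,
after a permutation, the first two matrices are rank-one connected and the list obtained by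
merging them (weighted average) satisfies the condition. -/
inductive SatisfiesH {m n : ℕ} : List (ℝ × Matrix (Fin m) (Fin n) ℝ) → Prop
  | base (t₁ t₂ : ℝ) (Y₁ Y₂ : Matrix (Fin m) (Fin n) ℝ) :
      (Y₁ - Y₂).rank ≤ 1 → SatisfiesH [(t₁, Y₁), (t₂, Y₂)]
  | perm {L L' : List (ℝ × Matrix (Fin m) (Fin n) ℝ)} :
      L.Perm L' → SatisfiesH L → SatisfiesH L'
  | split (t₁ t₂ : ℝ) (Y₁ Y₂ : Matrix (Fin m) (Fin n) ℝ)
      (L : List (ℝ × Matrix (Fin m) (Fin n) ℝ)) :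
      (Y₁ - Y₂).rank ≤ 1 →
      SatisfiesH ((t₁ + t₂, (t₁ / (t₁ + t₂)) • Y₁ + (t₂ / (t₁ + t₂)) • Y₂) :: L) →
      SatisfiesH ((t₁, Y₁) :: (t₂, Y₂) :: L)

/-- A prelaminate: a convex combination `Σ λᵢ δ_{Xᵢ}` of Dirac measures such that
`{(λ₁,X₁),…,(λ_N,X_N)}` satisfies the `H_N` condition. -/
def IsPrelaminate {m n : ℕ} (μ : Measure (Matrix (Fin m) (Fin n) ℝ)) : Prop :=
  ∃ L : List (ℝ × Matrix (Fin m) (Fin n) ℝ),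
    (∀ p ∈ L, 0 < p.1 ∧ p.1 ≤ 1) ∧ (L.map Prod.fst).sum = 1 ∧ SatisfiesH L ∧
    μ = (L.map fun p => (ENNReal.ofReal p.1) •
      (Measure.dirac p.2 : Measure (Matrix (Fin m) (Fin n) ℝ))).sum

/-!
Write `μ = ∑ λᵢ δ_{Xᵢ}` and `P_#μ = ∑ tⱼ δ_{Yⱼ}`. Since `μ` gives each fibre `P⁻¹{Y}` the mass
that `P_#μ` gives to `Y`, the atoms of `μ` can be split and grouped into blocks, one block of total
mass `tⱼ` lying over each `Yⱼ`. The splitting sequence of `P_#μ` then lifts block by block,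
because `P` reflects rank-one connections on `M_tri`: if `P (A - B)` has rank at most one, so does
`A - B`.
Hence, for rank-one connected `Y₁, Y₂`, the points of `M_tri` over the line through `Y₁` and `Y₂`
form a convex set any two of whose elements are rank-one connected, and inside such a set the
atoms of a block can be split off their barycentre one at a time.
-/

variable {α β : Type*}

def totalWeight (l : List (ℝ × α)) : ℝ := (l.map Prod.fst).sum

@[simp] lemma totalWeight_nil : totalWeight ([] : List (ℝ × α)) = 0 := rfl

@[simp] lemma totalWeight_cons (q : ℝ × α) (l : List (ℝ × α)) :
    totalWeight (q :: l) = q.1 + totalWeight l := by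
  simp [totalWeight]

@[simp] lemma totalWeight_append (l l' : List (ℝ × α)) :
    totalWeight (l ++ l') = totalWeight l + totalWeight l' := by
  simp [totalWeight]

lemma le_totalWeight {l : List (ℝ × α)} (h : ∀ q ∈ l, 0 ≤ q.1) {q : ℝ × α} (hq : q ∈ l) :
    q.1 ≤ totalWeight l :=
  List.single_le_sum (by simpa using h) _ (List.mem_map_of_mem hq)

lemma totalWeight_nonneg {l : List (ℝ × α)} (h : ∀ q ∈ l, 0 ≤ q.1) : 0 ≤ totalWeight l :=
  List.sum_nonneg (by simpa using h)

lemma totalWeight_pos {l : List (ℝ × α)} (hl : l ≠ []) (h : ∀ q ∈ l, 0 < q.1) :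
    0 < totalWeight l := by
  obtain _ | ⟨q, l⟩ := l
  · exact absurd rfl hl
  · simp only [List.forall_mem_cons] at h
    rw [totalWeight_cons]
    linarith [totalWeight_nonneg fun r hr => (h.2 r hr).le]

section Fibers

variable [DecidableEq β]

def fiberWeight (f : α → β) (l : List (ℝ × α)) (y : β) : ℝ :=
  (l.map fun q => if f q.2 = y then q.1 else 0).sum

@[simp] lemma fiberWeight_nil (f : α → β) (y : β) : fiberWeight f [] y = 0 := rfl

@[simp] lemma fiberWeight_cons (f : α → β) (q : ℝ × α) (l : List (ℝ × α)) (y : β) :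
    fiberWeight f (q :: l) y = (if f q.2 = y then q.1 else 0) + fiberWeight f l y := by
  simp [fiberWeight]

@[simp] lemma fiberWeight_append (f : α → β) (l l' : List (ℝ × α)) (y : β) :
    fiberWeight f (l ++ l') y = fiberWeight f l y + fiberWeight f l' y := by
  simp [fiberWeight]

lemma fiberWeight_nonneg (f : α → β) {l : List (ℝ × α)} (h : ∀ q ∈ l, 0 ≤ q.1) (y : β) :
    0 ≤ fiberWeight f l y :=
  List.sum_nonneg <| by simp only [List.mem_map]; rintro _ ⟨q, hq, rfl⟩; split_ifs <;> simp [h q hq]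

lemma le_fiberWeight (f : α → β) {l : List (ℝ × α)} (h : ∀ q ∈ l, 0 ≤ q.1) {q : ℝ × α}
    (hq : q ∈ l) : q.1 ≤ fiberWeight f l (f q.2) := by
  induction l with
  | nil => simp at hq
  | cons r l ih =>
    simp only [List.forall_mem_cons] at h
    have hnonneg := fiberWeight_nonneg f h.2 (f q.2)
    rcases List.mem_cons.1 hq with rfl | hq
    · simp [hnonneg]
    · rw [fiberWeight_cons]
      split_ifs <;> linarith [ih h.2 hq]

end Fibers

section DiracSum

variable [MeasurableSpace α]

def diracSum (l : List (ℝ × α)) : Measure α :=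
  (l.map fun q => ENNReal.ofReal q.1 • Measure.dirac q.2).sum

@[simp] lemma diracSum_nil : diracSum ([] : List (ℝ × α)) = 0 := rfl

@[simp] lemma diracSum_cons (q : ℝ × α) (l : List (ℝ × α)) :
    diracSum (q :: l) = ENNReal.ofReal q.1 • Measure.dirac q.2 + diracSum l := by
  simp [diracSum]

@[simp] lemma diracSum_append (l l' : List (ℝ × α)) :
    diracSum (l ++ l') = diracSum l + diracSum l' := by
  simp [diracSum]

variable [MeasurableSpace β] [MeasurableSingletonClass β] [DecidableEq β]

lemma map_diracSum_apply_singleton {f : α → β} (hf : Measurable f) {l : List (ℝ × α)}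
    (h : ∀ q ∈ l, 0 ≤ q.1) (y : β) :
    (diracSum l).map f {y} = ENNReal.ofReal (fiberWeight f l y) := by
  rw [Measure.map_apply hf (measurableSet_singleton y)]
  induction l with
  | nil => simp
  | cons q l ih =>
    simp only [List.forall_mem_cons] at h
    rw [diracSum_cons, fiberWeight_cons, Measure.add_apply, ih h.2,
      ENNReal.ofReal_add (by split_ifs <;> simp [h.1]) (fiberWeight_nonneg f h.2 y),
      Measure.smul_apply, Measure.dirac_apply' _ (hf (measurableSet_singleton y))]
    by_cases hqy : f q.2 = y <;> simp [hqy]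

lemma fiberWeight_eq_of_map_diracSum_eq {f g : α → β} (hf : Measurable f) (hg : Measurable g)
    {l l' : List (ℝ × α)} (hl : ∀ q ∈ l, 0 ≤ q.1) (hl' : ∀ q ∈ l', 0 ≤ q.1)
    (h : (diracSum l).map f = (diracSum l').map g) : fiberWeight f l = fiberWeight g l' := by
  funext y
  have hy := congrArg (· {y}) h
  simp only [map_diracSum_apply_singleton hf hl, map_diracSum_apply_singleton hg hl'] at hy
  exact (ENNReal.ofReal_eq_ofReal_iff (fiberWeight_nonneg f hl y)
    (fiberWeight_nonneg g hl' y)).1 hy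

end DiracSum

section Coupling

variable {S : Set α} {f : α → β}

variable (S f) in
def IsLift (blk : List (ℝ × α)) (p : ℝ × β) : Prop :=
  blk ≠ [] ∧ totalWeight blk = p.1 ∧ ∀ q ∈ blk, 0 < q.1 ∧ q.2 ∈ S ∧ f q.2 = p.2

lemma IsLift.fiberWeight_eq [DecidableEq β] {blk : List (ℝ × α)} {p : ℝ × β}
    (h : IsLift S f blk p) (y : β) : fiberWeight f blk y = if p.2 = y then p.1 else 0 := by
  obtain ⟨-, hW, hblk⟩ := h
  rw [fiberWeight, List.map_congr_left fun q hq => by rw [(hblk q hq).2.2], ← hW]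
  split_ifs <;> simp [totalWeight]

lemma totalWeight_flatten_of_forall₂_isLift {MM : List (List (ℝ × α))} {L₂ : List (ℝ × β)}
    (h : List.Forall₂ (IsLift S f) MM L₂) : totalWeight MM.flatten = totalWeight L₂ := by
  induction h with
  | nil => rfl
  | cons h _ ih => simp [ih, h.2.1]

lemma pos_of_mem_flatten_of_forall₂_isLift {MM : List (List (ℝ × α))} {L₂ : List (ℝ × β)}
    (h : List.Forall₂ (IsLift S f) MM L₂) : ∀ q ∈ MM.flatten, 0 < q.1 := by
  induction h with
  | nil => simp
  | cons h _ ih =>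
    intro q hq
    rw [List.flatten_cons, List.mem_append] at hq
    exact hq.elim (fun hq => (h.2.2 q hq).1) (ih q)

variable [DecidableEq β] [MeasurableSpace α]

lemma exists_isLift_of_le_fiberWeight {y : β} :
    ∀ {L : List (ℝ × α)} {t : ℝ}, (∀ q ∈ L, 0 < q.1 ∧ q.2 ∈ S) → 0 < t →
      t ≤ fiberWeight f L y →
      ∃ blk rest, IsLift S f blk (t, y) ∧ (∀ q ∈ rest, 0 < q.1 ∧ q.2 ∈ S) ∧
        diracSum L = diracSum (blk ++ rest)
  | [], t, _, ht, hle => by simp at hle; linarith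
  | q :: L, t, hL, ht, hle => by
    simp only [List.forall_mem_cons] at hL
    obtain ⟨⟨hq, hqS⟩, hL⟩ := hL
    rw [fiberWeight_cons] at hle
    by_cases hqy : f q.2 = y
    · rw [if_pos hqy] at hle
      rcases lt_trichotomy t q.1 with hlt | rfl | hgt
      · refine ⟨[(t, q.2)], (q.1 - t, q.2) :: L, ⟨by simp, by simp, by simp [ht, hqS, hqy]⟩,
          List.forall_mem_cons.2 ⟨⟨sub_pos.2 hlt, hqS⟩, hL⟩, ?_⟩
        rw [List.singleton_append, diracSum_cons, diracSum_cons, diracSum_cons, ← add_assoc,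
          ← add_smul, ← ENNReal.ofReal_add ht.le (sub_nonneg.2 hlt.le), add_sub_cancel]
      · exact ⟨[q], L, ⟨by simp, by simp, by simp [hq, hqS, hqy]⟩, hL, rfl⟩
      · obtain ⟨blk, rest, ⟨-, hW, hblk⟩, hrest, hsplit⟩ :=
          exists_isLift_of_le_fiberWeight hL (sub_pos.2 hgt) (by linarith)
        refine ⟨q :: blk, rest, ⟨by simp, by simp [hW], ?_⟩, hrest, by simp [hsplit]⟩
        simp only [List.forall_mem_cons]
        exact ⟨⟨hq, hqS, hqy⟩, hblk⟩
    · rw [if_neg hqy, zero_add] at hle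
      obtain ⟨blk, rest, hlift, hrest, hsplit⟩ := exists_isLift_of_le_fiberWeight hL ht hle
      refine ⟨blk, q :: rest, hlift, List.forall_mem_cons.2 ⟨⟨hq, hqS⟩, hrest⟩, ?_⟩
      simp [hsplit, add_left_comm]

lemma exists_forall₂_isLift [MeasurableSpace β] [MeasurableSingletonClass β]
    (hf : Measurable f) :
    ∀ {L₂ : List (ℝ × β)} {L : List (ℝ × α)}, (∀ p ∈ L₂, 0 < p.1) →
      (∀ q ∈ L, 0 < q.1 ∧ q.2 ∈ S) → fiberWeight f L = fiberWeight id L₂ →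
      ∃ MM : List (List (ℝ × α)), List.Forall₂ (IsLift S f) MM L₂ ∧
        diracSum MM.flatten = diracSum L
  | [], L, _, hL, hfib => by
    obtain _ | ⟨q, L⟩ := L
    · exact ⟨[], .nil, rfl⟩
    · have hq := le_fiberWeight f (fun r hr => (hL r hr).1.le) (q := q) List.mem_cons_self
      rw [hfib, fiberWeight_nil] at hq
      exact absurd hq (not_le.2 (hL q List.mem_cons_self).1)
  | p :: L₂, L, hL₂, hL, hfib => by
    simp only [List.forall_mem_cons] at hL₂
    have hle : p.1 ≤ fiberWeight f L p.2 := by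
      rw [hfib, fiberWeight_cons, id, if_pos rfl]
      linarith [fiberWeight_nonneg id (fun r hr => (hL₂.2 r hr).le) p.2]
    obtain ⟨blk, rest, hlift, hrest, hsplit⟩ := exists_isLift_of_le_fiberWeight hL hL₂.1 hle
    have hfib' : fiberWeight f rest = fiberWeight id L₂ := by
      funext y
      have hLy := congrFun (fiberWeight_eq_of_map_diracSum_eq hf hf (fun q hq => (hL q hq).1.le)
        (fun q hq => (List.mem_append.1 hq).elim (fun h => (hlift.2.2 q h).1.le)
          (fun h => (hrest q h).1.le))
        (congrArg (·.map f) hsplit)) y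
      rw [fiberWeight_append, hlift.fiberWeight_eq, hfib, fiberWeight_cons] at hLy
      simp only [id] at hLy
      linarith
    obtain ⟨MM, hMM, hMMrest⟩ := exists_forall₂_isLift hf hL₂.2 hrest hfib'
    exact ⟨blk :: MM, .cons hlift hMM, by rw [List.flatten_cons, diracSum_append, hMMrest,
      hsplit, diracSum_append]⟩

end Coupling

section WeightedAverage

variable {E F : Type*} [AddCommGroup E] [Module ℝ E] [AddCommGroup F] [Module ℝ F]

def weightedSum (l : List (ℝ × E)) : E := (l.map fun q => q.1 • q.2).sum

def weightedAvg (l : List (ℝ × E)) : E := (totalWeight l)⁻¹ • weightedSum l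

@[simp] lemma weightedSum_cons (q : ℝ × E) (l : List (ℝ × E)) :
    weightedSum (q :: l) = q.1 • q.2 + weightedSum l := by
  simp [weightedSum]

@[simp] lemma weightedSum_append (l l' : List (ℝ × E)) :
    weightedSum (l ++ l') = weightedSum l + weightedSum l' := by
  simp [weightedSum]

@[simp] lemma weightedAvg_singleton {q : ℝ × E} (hq : q.1 ≠ 0) : weightedAvg [q] = q.2 := by
  simp [weightedAvg, weightedSum, smul_smul, hq]

lemma weightedAvg_cons (q : ℝ × E) {l : List (ℝ × E)} (hl : totalWeight l ≠ 0) :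
    weightedAvg (q :: l) = (q.1 / totalWeight (q :: l)) • q.2 +
      (totalWeight l / totalWeight (q :: l)) • weightedAvg l := by
  rw [weightedAvg, weightedAvg, weightedSum_cons, smul_add, smul_smul, smul_smul,
    div_mul_eq_mul_div, mul_inv_cancel₀ hl, one_div, div_eq_inv_mul]

lemma map_weightedSum_eq_smul (P : E →ₗ[ℝ] F) {l : List (ℝ × E)} {Y : F}
    (h : ∀ q ∈ l, P q.2 = Y) : P (weightedSum l) = totalWeight l • Y := by
  induction l with
  | nil => simp [weightedSum]
  | cons q l ih =>
    simp only [List.forall_mem_cons] at h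
    simp [h.1, ih h.2, add_smul]

lemma Convex.weightedAvg_mem {T : Set E} (hT : Convex ℝ T) :
    ∀ {l : List (ℝ × E)}, l ≠ [] → (∀ q ∈ l, 0 < q.1 ∧ q.2 ∈ T) → weightedAvg l ∈ T
  | [], hl, _ => absurd rfl hl
  | [q], _, h => by simpa [(h q (by simp)).1.ne'] using (h q (by simp)).2
  | q :: r :: l, _, h => by
    simp only [List.forall_mem_cons (l := r :: l)] at h
    have hW := totalWeight_pos (List.cons_ne_nil r l) fun q hq => (h.2 q hq).1
    have hWq : 0 < totalWeight (q :: r :: l) := by rw [totalWeight_cons]; linarith [h.1.1]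
    rw [weightedAvg_cons q hW.ne']
    refine hT h.1.2 (Convex.weightedAvg_mem hT (List.cons_ne_nil r l) h.2)
      (div_nonneg h.1.1.le hWq.le) (div_nonneg hW.le hWq.le) ?_
    rw [← add_div, ← totalWeight_cons, div_self hWq.ne']

end WeightedAverage

section RankOneConnected

variable {m k : ℕ}

def IsRankOneConnected (T : Set (Matrix (Fin m) (Fin k) ℝ)) : Prop :=
  ∀ A ∈ T, ∀ B ∈ T, (A - B).rank ≤ 1

variable {T : Set (Matrix (Fin m) (Fin k) ℝ)}

lemma satisfiesH_append_of_cons_weightedAvg (hT : Convex ℝ T) (hT₁ : IsRankOneConnected T) :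
    ∀ {blk : List (ℝ × Matrix (Fin m) (Fin k) ℝ)}, blk ≠ [] → (∀ q ∈ blk, 0 < q.1 ∧ q.2 ∈ T) →
      ∀ {K}, SatisfiesH ((totalWeight blk, weightedAvg blk) :: K) → SatisfiesH (blk ++ K)
  | [], hblk, _, _, _ => absurd rfl hblk
  | [q], _, h, _, hK => by simpa [(h q (by simp)).1.ne'] using hK
  | q :: r :: l, _, h, K, hK => by
    simp only [List.forall_mem_cons (l := r :: l)] at h
    have hW := totalWeight_pos (List.cons_ne_nil r l) fun q hq => (h.2 q hq).1
    have hsplit : SatisfiesH ((q.1, q.2) :: (totalWeight (r :: l), weightedAvg (r :: l)) :: K) :=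
      .split _ _ _ _ _ (hT₁ _ h.1.2 _ (hT.weightedAvg_mem (List.cons_ne_nil r l) h.2)) <| by
        rwa [← totalWeight_cons, ← weightedAvg_cons q hW.ne']
    exact (satisfiesH_append_of_cons_weightedAvg hT hT₁ (List.cons_ne_nil r l) h.2
      (.perm (.swap _ _ _) hsplit)).perm List.perm_middle

lemma satisfiesH_of_forall_mem (hT : Convex ℝ T) (hT₁ : IsRankOneConnected T)
    {l : List (ℝ × Matrix (Fin m) (Fin k) ℝ)} (hl : 2 ≤ l.length)
    (h : ∀ q ∈ l, 0 < q.1 ∧ q.2 ∈ T) : SatisfiesH l := by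
  obtain _ | ⟨q, _ | ⟨r, l⟩⟩ := l
  · simp at hl
  · simp at hl
  simp only [List.forall_mem_cons (l := r :: l)] at h
  have hpair : SatisfiesH [(totalWeight (r :: l), weightedAvg (r :: l)), (q.1, q.2)] :=
    .base _ _ _ _ (hT₁ _ (hT.weightedAvg_mem (List.cons_ne_nil r l) h.2) _ h.1.2)
  exact (satisfiesH_append_of_cons_weightedAvg hT hT₁ (List.cons_ne_nil r l) h.2 hpair).perm
    (List.perm_append_singleton _ _)

end RankOneConnected

lemma Matrix.rank_smul_le {K m n : Type*} [Field K] [Fintype n] (c : K) (A : Matrix m n K) :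
    (c • A).rank ≤ A.rank := by
  rcases eq_or_ne c 0 with rfl | hc
  · simp
  · rw [Matrix.rank_smul_of_mem_nonZeroDivisors _ (mem_nonZeroDivisors_of_ne_zero hc)]

section Lifting

variable {m k m' k' : ℕ} (P : Matrix (Fin m) (Fin k) ℝ →ₗ[ℝ] Matrix (Fin m') (Fin k') ℝ)
  (S : Set (Matrix (Fin m) (Fin k) ℝ))

def liftedLine (Y₁ Y₂ : Matrix (Fin m') (Fin k') ℝ) : Set (Matrix (Fin m) (Fin k) ℝ) :=
  {A | A ∈ S ∧ ∃ s : ℝ, P A = s • Y₁ + (1 - s) • Y₂}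

variable {P S}

lemma Convex.liftedLine (hS : Convex ℝ S) (Y₁ Y₂ : Matrix (Fin m') (Fin k') ℝ) :
    Convex ℝ (liftedLine P S Y₁ Y₂) := by
  rintro A ⟨hA, s, hs⟩ B ⟨hB, s', hs'⟩ a b ha hb hab
  refine ⟨hS hA hB ha hb hab, a * s + b * s', ?_⟩
  obtain rfl := eq_sub_of_add_eq' hab
  rw [map_add, map_smul, map_smul, hs, hs']
  module

lemma isRankOneConnected_liftedLine
    (hP : ∀ A ∈ S, ∀ B ∈ S, (P A - P B).rank ≤ 1 → (A - B).rank ≤ 1)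
    {Y₁ Y₂ : Matrix (Fin m') (Fin k') ℝ} (hY : (Y₁ - Y₂).rank ≤ 1) :
    IsRankOneConnected (liftedLine P S Y₁ Y₂) := by
  rintro A ⟨hA, s, hs⟩ B ⟨hB, s', hs'⟩
  refine hP A hA B hB ?_
  have hdiff : P A - P B = (s - s') • (Y₁ - Y₂) := by rw [hs, hs']; module
  exact hdiff ▸ (Matrix.rank_smul_le _ _).trans hY

lemma mem_liftedLine_of_isLift {B₁ B₂ : List (ℝ × Matrix (Fin m) (Fin k) ℝ)} {t₁ t₂ : ℝ}
    {Y₁ Y₂ : Matrix (Fin m') (Fin k') ℝ} (h₁ : IsLift S P B₁ (t₁, Y₁))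
    (h₂ : IsLift S P B₂ (t₂, Y₂)) : ∀ q ∈ B₁ ++ B₂, 0 < q.1 ∧ q.2 ∈ liftedLine P S Y₁ Y₂ := by
  intro q hq
  rcases List.mem_append.1 hq with hq | hq
  · obtain ⟨hpos, hqS, hPq⟩ := h₁.2.2 q hq
    exact ⟨hpos, hqS, 1, by simp [hPq]⟩
  · obtain ⟨hpos, hqS, hPq⟩ := h₂.2.2 q hq
    exact ⟨hpos, hqS, 0, by simp [hPq]⟩

lemma SatisfiesH.flatten_of_forall₂_isLift (hS : Convex ℝ S)
    (hP : ∀ A ∈ S, ∀ B ∈ S, (P A - P B).rank ≤ 1 → (A - B).rank ≤ 1)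
    {L₂ : List (ℝ × Matrix (Fin m') (Fin k') ℝ)} (hL₂ : SatisfiesH L₂) :
    ∀ {MM}, List.Forall₂ (IsLift S P) MM L₂ → SatisfiesH MM.flatten := by
  induction hL₂ with
  | base t₁ t₂ Y₁ Y₂ hY =>
    rintro _ (_ | @⟨B₁, _, _, _, h₁, _ | @⟨B₂, _, _, _, h₂, _ | _⟩⟩)
    have hne₁ := List.length_pos_iff.2 h₁.1
    have hne₂ := List.length_pos_iff.2 h₂.1
    simpa using satisfiesH_of_forall_mem (hS.liftedLine Y₁ Y₂)
      (isRankOneConnected_liftedLine hP hY) (by simp; omega) (mem_liftedLine_of_isLift h₁ h₂)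
  | perm hperm _ ih =>
    intro MM hMM
    have : Relation.Comp (List.Forall₂ (IsLift S P)) List.Perm MM _ := ⟨_, hMM, hperm.symm⟩
    rw [List.forall₂_comp_perm_eq_perm_comp_forall₂] at this
    obtain ⟨MM', hperm', hMM'⟩ := this
    exact (ih hMM').perm hperm'.flatten.symm
  | split t₁ t₂ Y₁ Y₂ K hY _ ih =>
    rintro _ (_ | @⟨B₁, _, _, _, h₁, _ | @⟨B₂, _, MM, _, h₂, hMM⟩⟩)
    have hT := hS.liftedLine (P := P) Y₁ Y₂
    have hT₁ := isRankOneConnected_liftedLine hP hY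
    have hblk := mem_liftedLine_of_isLift h₁ h₂
    have hne : B₁ ++ B₂ ≠ [] := by simp [h₁.1]
    have hW : totalWeight (B₁ ++ B₂) = t₁ + t₂ := by simp [h₁.2.1, h₂.2.1]
    have hPavg : P (weightedAvg (B₁ ++ B₂)) = (t₁ / (t₁ + t₂)) • Y₁ + (t₂ / (t₁ + t₂)) • Y₂ := by
      rw [weightedAvg, map_smul, weightedSum_append, map_add,
        map_weightedSum_eq_smul P fun q hq => (h₁.2.2 q hq).2.2,
        map_weightedSum_eq_smul P fun q hq => (h₂.2.2 q hq).2.2, h₁.2.1, h₂.2.1, hW]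
      simp only [smul_add, smul_smul, div_eq_inv_mul]
    have hmerged : IsLift S P [(totalWeight (B₁ ++ B₂), weightedAvg (B₁ ++ B₂))]
        (t₁ + t₂, (t₁ / (t₁ + t₂)) • Y₁ + (t₂ / (t₁ + t₂)) • Y₂) :=
      ⟨List.cons_ne_nil _ _, by simp [hW], List.forall_mem_singleton.2
        ⟨totalWeight_pos hne fun q hq => (hblk q hq).1, (hT.weightedAvg_mem hne hblk).1, hPavg⟩⟩
    simpa using satisfiesH_append_of_cons_weightedAvg hT hT₁ hne hblk
      (by simpa using ih (.cons hmerged hMM))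

end Lifting

instance {m k : ℕ} : MeasurableSingletonClass (Matrix (Fin m) (Fin k) ℝ) :=
  inferInstanceAs (MeasurableSingletonClass (Fin m → Fin k → ℝ))

section Diag

variable {n : ℕ}

lemma convex_Mtri (n : ℕ) : Convex ℝ (Mtri n) := by
  intro A hA B hB a b _ _ _ j hj
  simp [hA j hj, hB j hj]

lemma sub_mem_Mtri {A B : Matrix (Fin 2) (Fin n) ℝ} (hA : A ∈ Mtri n) (hB : B ∈ Mtri n) :
    A - B ∈ Mtri n := fun j hj => by simp [hA j hj, hB j hj]

def PdiagLinear (n : ℕ) : Matrix (Fin 2) (Fin n) ℝ →ₗ[ℝ] Matrix (Fin 2) (Fin n) ℝ where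
  toFun := Pdiag n
  map_add' X Y := by
    ext i j
    simp only [Pdiag, Matrix.of_apply, Matrix.add_apply]
    split_ifs <;> simp
  map_smul' c X := by
    ext i j
    simp only [Pdiag, Matrix.of_apply, Matrix.smul_apply, RingHom.id_apply]
    split_ifs <;> simp

lemma measurable_Pdiag (n : ℕ) : Measurable (Pdiag n) :=
  measurable_pi_lambda _ fun i => measurable_pi_lambda _ fun j => by
    simp only [Pdiag, Matrix.of_apply]
    split_ifs <;> fun_prop

/-- A nonzero entry of the second row of `D` can only sit in the last column; if the first row
had a nonzero entry elsewhere, the two would span an invertible `2 × 2` minor of `Pdiag n D`. -/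
lemma rank_le_one_of_rank_Pdiag_le_one {D : Matrix (Fin 2) (Fin n) ℝ} (hD : D ∈ Mtri n)
    (h : (Pdiag n D).rank ≤ 1) : D.rank ≤ 1 := by
  by_cases hrow : ∀ j, D 1 j = 0
  · have hDeq : D = Matrix.vecMulVec (Pi.single 0 1) (D 0) := by
      ext i j
      fin_cases i <;> simp [Matrix.vecMulVec_apply, hrow]
    exact hDeq ▸ Matrix.rank_vecMulVec_le _ _
  obtain ⟨k, hk⟩ := not_forall.1 hrow
  have hkn : (k : ℕ) + 1 = n := by
    by_contra hkn
    exact hk (hD k (by omega))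
  have hcol : ∀ j ≠ k, D 0 j = 0 := by
    intro j hjk
    by_contra hj
    have hjn : (j : ℕ) + 1 < n := by
      have := Fin.val_ne_of_ne hjk
      omega
    have hminor : (Pdiag n D).submatrix id ![j, k] = Matrix.diagonal ![D 0 j, D 1 k] := by
      ext a b
      fin_cases a <;> fin_cases b <;> simp [Pdiag, hjn, hkn, hD j hjn]
    have hunit : IsUnit ((Pdiag n D).submatrix id ![j, k]) := by
      rw [Matrix.isUnit_iff_isUnit_det, hminor, Matrix.det_diagonal]
      simp [hj, hk]
    have := Matrix.rank_submatrix_le (Pdiag n D) id ![j, k]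
    rw [Matrix.rank_of_isUnit _ hunit, Fintype.card_fin] at this
    omega
  have hDeq : D = Matrix.vecMulVec (fun i => D i k) (Pi.single k 1) := by
    ext i j
    rcases eq_or_ne j k with rfl | hjk
    · simp [Matrix.vecMulVec_apply]
    · fin_cases i
      · simp [Matrix.vecMulVec_apply, hjk, hcol j hjk]
      · simp [Matrix.vecMulVec_apply, hjk, hD j (by have := Fin.val_ne_of_ne hjk; omega)]
  exact hDeq ▸ Matrix.rank_vecMulVec_le _ _

end Diag

theorem prelaminate_of_pushforward_prelaminate_general (n : ℕ)
    (μ : Measure (Matrix (Fin 2) (Fin n) ℝ))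
    (L : List (ℝ × Matrix (Fin 2) (Fin n) ℝ))
    (hw : ∀ p ∈ L, 0 < p.1 ∧ p.1 ≤ 1)
    (htri : ∀ p ∈ L, p.2 ∈ Mtri n)
    (hμ : μ = (L.map fun p => (ENNReal.ofReal p.1) •
      (Measure.dirac p.2 : Measure (Matrix (Fin 2) (Fin n) ℝ))).sum)
    (hP : IsPrelaminate (μ.map (Pdiag n))) :
    IsPrelaminate μ := by
  subst hμ
  obtain ⟨L₂, hw₂, hsum₂, hH₂, hL₂⟩ := hP
  have hfib : fiberWeight (Pdiag n) L = fiberWeight id L₂ :=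
    fiberWeight_eq_of_map_diracSum_eq (measurable_Pdiag n) measurable_id
      (fun q hq => (hw q hq).1.le) (fun p hp => (hw₂ p hp).1.le)
      (by rw [Measure.map_id]; exact hL₂)
  obtain ⟨MM, hMM, hMMμ⟩ := exists_forall₂_isLift (S := Mtri n) (measurable_Pdiag n)
    (fun p hp => (hw₂ p hp).1) (fun q hq => ⟨(hw q hq).1, htri q hq⟩) hfib
  have hpos := pos_of_mem_flatten_of_forall₂_isLift hMM
  have htotal : totalWeight MM.flatten = 1 :=
    (totalWeight_flatten_of_forall₂_isLift hMM).trans hsum₂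
  have hH : SatisfiesH MM.flatten :=
    hH₂.flatten_of_forall₂_isLift (P := PdiagLinear n) (convex_Mtri n)
      (fun A hA B hB h => rank_le_one_of_rank_Pdiag_le_one (sub_mem_Mtri hA hB)
        (by rwa [← map_sub] at h)) hMM
  refine ⟨MM.flatten, fun q hq => ⟨hpos q hq, ?_⟩, htotal, hH, hMMμ.symm⟩
  exact htotal ▸ le_totalWeight (fun r hr => (hpos r hr).le) hq

/-- If `μ` is a finite convex combination of Dirac measures supported in `M^{2×n}_tri` and
`P_#μ` is a prelaminate, then `μ` is a prelaminate. -/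
theorem prelaminate_of_pushforward_prelaminate (n : ℕ) (hn : 2 ≤ n)
    (μ : Measure (Matrix (Fin 2) (Fin n) ℝ))
    (L : List (ℝ × Matrix (Fin 2) (Fin n) ℝ))
    (hw : ∀ p ∈ L, 0 < p.1 ∧ p.1 ≤ 1)
    (hsum : (L.map Prod.fst).sum = 1)
    (htri : ∀ p ∈ L, p.2 ∈ Mtri n)
    (hμ : μ = (L.map fun p => (ENNReal.ofReal p.1) •
      (Measure.dirac p.2 : Measure (Matrix (Fin 2) (Fin n) ℝ))).sum)
    (hP : IsPrelaminate (μ.map (Pdiag n))) :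
    IsPrelaminate μ :=
  prelaminate_of_pushforward_prelaminate_general n μ L hw htri hμ hP
end
end

section
/- Let μ be a Borel probability measure with compact support contained in M^{2×2}_+. Then the barycentre of the dual measure satisfies (μ̃)‾ = Ψ(μ̄) if and only if μ is polyconvex, i.e. if and only if ∫ det X dμ(X) = det(μ̄). Moreover, in general the barycentre of μ̃ is (1/μ̄₁₂)·[[−μ̄₁₁, 1], [−∫ det X dμ(X), μ̄₂₂]]. -/
open MeasureTheory

noncomputable section

/-!
On `M^{2×2}_+` the density `X₁₂` of `μ̃` cancels the factor `1/X₁₂` of `Ψ`: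
`X₁₂ Ψ(X) = [[-X₁₁, 1], [-det X, X₂₂]]`. Hence each entry of the barycentre of `μ̃` is `1/μ̄₁₂`
times the `μ`-integral of an entry of this matrix, and only the determinant entry fails to
commute with integration. Comparing with `Ψ(μ̄) = (1/μ̄₁₂)[[-μ̄₁₁, 1], [-det μ̄, μ̄₂₂]]`, where
`μ̄₁₂ > 0` because `μ` is carried by a compact subset of `M^{2×2}_+`, gives the equivalence.
-/

lemma measurable_matrix_entry {m n : ℕ} (i : Fin m) (j : Fin n) :
    Measurable fun X : Matrix (Fin m) (Fin n) ℝ => X i j :=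
  (measurable_pi_apply j).comp (measurable_pi_apply i)

lemma integral_pos_of_ae_pos {α : Type*} [MeasurableSpace α] {μ : Measure α} [NeZero μ]
    {f : α → ℝ} (hf : ∀ᵐ x ∂μ, 0 < f x) (hfi : Integrable f μ) : 0 < ∫ x, f x ∂μ := by
  rw [integral_pos_iff_support_of_nonneg_ae (hf.mono fun _ h => h.le) hfi]
  exact measure_pos_of_superset (fun x (hx : 0 < f x) => Function.mem_support.mpr hx.ne')
    (frequently_ae_iff.mp hf.frequently)

section DualMeasure

local notation "M2" => Matrix (Fin 2) (Fin 2) ℝ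

variable {μ : Measure M2}

lemma measurable_Psi : Measurable Psi := by
  have h := measurable_matrix_entry (m := 2) (n := 2)
  refine measurable_pi_iff.mpr fun i => measurable_pi_iff.mpr fun j => ?_
  refine (h 0 1).inv.mul ?_
  fin_cases i <;> fin_cases j
  · exact (h 0 0).neg
  · exact measurable_const
  · simp only [Matrix.det_fin_two]
    exact (((h 0 0).mul (h 1 1)).sub ((h 0 1).mul (h 1 0))).neg
  · exact h 1 1

lemma smul_Psi {X : M2} (hX : X 0 1 ≠ 0) :
    X 0 1 • Psi X = !![-(X 0 0), 1; -X.det, X 1 1] := by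
  rw [Psi, smul_smul, mul_inv_cancel₀ hX, one_smul]

lemma integral_dualMeasure (hμ : ∀ᵐ X ∂μ, 0 ≤ X 0 1) {g : M2 → ℝ}
    (hg : Measurable g) :
    ∫ Y, g Y ∂dualMeasure μ = (matBarycenter μ 0 1)⁻¹ * ∫ X, X 0 1 * g (Psi X) ∂μ := by
  have hb : 0 ≤ matBarycenter μ 0 1 := integral_nonneg_of_ae hμ
  rw [dualMeasure, integral_map measurable_Psi.aemeasurable hg.aestronglyMeasurable,
    integral_smul_measure, ENNReal.toReal_inv, ENNReal.toReal_ofReal hb, smul_eq_mul]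
  congr 1
  rw [integral_withDensity_eq_integral_toReal_smul (measurable_matrix_entry 0 1).ennreal_ofReal
    (ae_of_all _ fun _ => ENNReal.ofReal_lt_top)]
  refine integral_congr_ae ?_
  filter_upwards [hμ] with X hX
  rw [ENNReal.toReal_ofReal hX, smul_eq_mul]

theorem matBarycenter_dualMeasure [IsProbabilityMeasure μ]
    (hμ : ∀ᵐ X ∂μ, 0 < X 0 1) :
    matBarycenter (dualMeasure μ) = (matBarycenter μ 0 1)⁻¹ •
      !![-(matBarycenter μ 0 0), 1; -(∫ X, X.det ∂μ), matBarycenter μ 1 1] := by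
  ext i j
  rw [matBarycenter, Matrix.of_apply, integral_dualMeasure (hμ.mono fun _ h => h.le)
    (measurable_matrix_entry i j), Matrix.smul_apply, smul_eq_mul]
  congr 1
  have hentry : ∀ᵐ X ∂μ, X 0 1 * Psi X i j = !![-(X 0 0), 1; -X.det, X 1 1] i j := by
    filter_upwards [hμ] with X hX
    rw [← smul_Psi hX.ne']
    rfl
  rw [integral_congr_ae hentry]
  fin_cases i <;> fin_cases j <;> simp [integral_neg, matBarycenter]

lemma matBarycenter_pos_of_isCompact [IsProbabilityMeasure μ]
    {K : Set M2} (hK : IsCompact K) (hKM : K ⊆ Mplus) (hae : ∀ᵐ X ∂μ, X ∈ K) :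
    0 < matBarycenter μ 0 1 := by
  obtain ⟨C, hC⟩ := hK.exists_bound_of_continuousOn
    (continuous_id.matrix_elem 0 1).continuousOn
  have hint : Integrable (fun X : M2 => X 0 1) μ :=
    .of_bound (measurable_matrix_entry 0 1).aestronglyMeasurable C (hae.mono hC)
  exact integral_pos_of_ae_pos (hae.mono fun _ h => hKM h) hint

end DualMeasure

/-- The barycentre of the dual measure satisfies `(μ̃)‾ = Ψ(μ̄)` iff `μ` is polyconvex;
moreover in general `(μ̃)‾ = (1/μ̄₁₂)·[[−μ̄₁₁, 1], [−∫ det X dμ, μ̄₂₂]]`. -/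
theorem dualMeasure_barycenter
    (μ : Measure (Matrix (Fin 2) (Fin 2) ℝ))
    (hprob : IsProbabilityMeasure μ)
    (hsupp : ∃ K : Set (Matrix (Fin 2) (Fin 2) ℝ), IsCompact K ∧ K ⊆ Mplus ∧ μ Kᶜ = 0) :
    (matBarycenter (dualMeasure μ) = Psi (matBarycenter μ) ↔
      ∫ X, X.det ∂μ = (matBarycenter μ).det) ∧
    matBarycenter (dualMeasure μ) =
      (matBarycenter μ 0 1)⁻¹ •
        !![-(matBarycenter μ 0 0), 1; -(∫ X, X.det ∂μ), matBarycenter μ 1 1] := by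
  obtain ⟨K, hK, hKM, hμK⟩ := hsupp
  have hae : ∀ᵐ X ∂μ, X ∈ K := mem_ae_iff.mpr hμK
  have hpos : ∀ᵐ X ∂μ, 0 < X 0 1 := hae.mono fun _ hX => hKM hX
  have hb : (matBarycenter μ 0 1)⁻¹ ≠ 0 :=
    inv_ne_zero (matBarycenter_pos_of_isCompact hK hKM hae).ne'
  refine ⟨?_, matBarycenter_dualMeasure hpos⟩
  rw [matBarycenter_dualMeasure hpos, Psi, smul_right_inj hb]
  simp [eq_comm]

end
end

section
/- If f : M^{2×2}_+ → ℝ is rank-one convex on M^{2×2}_+, then its dual function f̃(X) = X₁₂ · f(Ψ(X)) is rank-one convex on M^{2×2}_+. -/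
open MeasureTheory

noncomputable section

/-!
Along rank-one segments the map `X ↦ X₁₂ • Ψ(X) = [[-X₁₁, 1], [-det X, X₂₂]]` is affine, because
`det` is. So for `rank (X - Y) ≤ 1`, `Ψ` maps the segment `[X, Y]` onto `[Ψ(X), Ψ(Y)]`, which is
again rank-one since `det (Ψ(X) - Ψ(Y)) = -det (X - Y) / (X₁₂ Y₁₂)`, and the parameter `t`
becomes `s = t X₁₂ / (t X₁₂ + (1 - t) Y₁₂)`. Hence `f̃` is the perspective of `f` along rank-one
lines and inherits its convexity.
-/

namespace Matrix

theorem rank_lt_card_iff_det_eq_zero {n K : Type*} [Fintype n] [DecidableEq n] [Field K]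
    (A : Matrix n n K) : A.rank < Fintype.card n ↔ A.det = 0 := by
  refine ⟨fun h => by_contra fun hA => h.ne (A.rank_of_det_ne_zero hA), fun hA => ?_⟩
  obtain ⟨v, hv, hAv⟩ := exists_mulVec_eq_zero_iff.2 hA
  have hker : 1 ≤ Module.finrank K (LinearMap.ker A.mulVecLin) :=
    Submodule.one_le_finrank_iff.2 fun hbot =>
      hv <| (Submodule.mem_bot K).1 (hbot ▸ LinearMap.mem_ker.2 hAv)
  have := A.mulVecLin.finrank_range_add_finrank_ker
  rw [Module.finrank_fintype_fun_eq_card] at this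
  rw [rank]
  omega

theorem rank_le_one_iff_det_eq_zero_fin_two {K : Type*} [Field K]
    (A : Matrix (Fin 2) (Fin 2) K) : A.rank ≤ 1 ↔ A.det = 0 := by
  rw [← rank_lt_card_iff_det_eq_zero, Fintype.card_fin, Nat.lt_succ_iff]

theorem det_smul_add_one_sub_smul_fin_two {R : Type*} [CommRing R]
    (X Y : Matrix (Fin 2) (Fin 2) R) (t : R) :
    (t • X + (1 - t) • Y).det = t * X.det + (1 - t) * Y.det - t * (1 - t) * (X - Y).det := by
  simp only [det_fin_two, add_apply, smul_apply, sub_apply, smul_eq_mul]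
  ring

end Matrix

open Matrix

theorem apply_zero_one_smul_Psi {X : Matrix (Fin 2) (Fin 2) ℝ} (hX : X 0 1 ≠ 0) :
    X 0 1 • Psi X = !![-(X 0 0), 1; -X.det, X 1 1] := by
  rw [Psi, smul_inv_smul₀ hX]

theorem det_Psi_sub_Psi {X Y : Matrix (Fin 2) (Fin 2) ℝ} (hX : X 0 1 ≠ 0) (hY : Y 0 1 ≠ 0) :
    (Psi X - Psi Y).det = -(X - Y).det / (X 0 1 * Y 0 1) := by
  simp only [Psi, Fin.isValue, det_fin_two, neg_sub, smul_of, smul_cons, smul_eq_mul, mul_neg,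
    mul_one, smul_empty, of_sub_of, sub_cons, head_cons, sub_neg_eq_add, tail_cons, sub_self,
    zero_empty, of_apply, cons_val', cons_val_zero, cons_val_fin_one, cons_val_one,
    Matrix.sub_apply]
  field_simp
  ring

theorem mapsTo_Psi_Mplus : Set.MapsTo Psi Mplus Mplus := fun X (hX : 0 < X 0 1) => by
  simpa [Mplus, Psi] using hX

theorem Psi_smul_add_one_sub_smul {X Y : Matrix (Fin 2) (Fin 2) ℝ} (hX : X 0 1 ≠ 0)
    (hY : Y 0 1 ≠ 0) (hXY : (X - Y).det = 0) {t : ℝ} (hc : t * X 0 1 + (1 - t) * Y 0 1 ≠ 0) :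
    let s := t * X 0 1 / (t * X 0 1 + (1 - t) * Y 0 1)
    Psi (t • X + (1 - t) • Y) = s • Psi X + (1 - s) • Psi Y := by
  intro s
  have hs : 1 - s = (1 - t) * Y 0 1 / (t * X 0 1 + (1 - t) * Y 0 1) := by
    rw [eq_div_iff hc, sub_mul, div_mul_cancel₀ _ hc]
    ring
  have hZ : (t • X + (1 - t) • Y) 0 1 = t * X 0 1 + (1 - t) * Y 0 1 := by simp
  rw [← smul_right_inj hc, ← hZ, apply_zero_one_smul_Psi (hZ ▸ hc), hs, hZ, smul_add,
    smul_smul, smul_smul, mul_div_cancel₀ _ hc, mul_div_cancel₀ _ hc, mul_smul, mul_smul,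
    apply_zero_one_smul_Psi hX, apply_zero_one_smul_Psi hY, det_smul_add_one_sub_smul_fin_two,
    hXY]
  ext i j
  fin_cases i <;> fin_cases j <;> simp <;> ring

/-- If `f` is rank-one convex on `M^{2×2}_+` then its dual `f̃(X) = X₁₂ · f(Ψ(X))` is
rank-one convex on `M^{2×2}_+`. -/
theorem dualFn_rankOneConvexOn (f : Matrix (Fin 2) (Fin 2) ℝ → ℝ)
    (hf : IsRankOneConvexOn Mplus f) :
    IsRankOneConvexOn Mplus (dualFn f) := by
  intro X hX Y hY hXY t ⟨ht0, ht1⟩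
  have hX' : 0 < X 0 1 := hX
  have hY' : 0 < Y 0 1 := hY
  set c := t * X 0 1 + (1 - t) * Y 0 1
  have hc : 0 < c := by
    rcases ht0.eq_or_lt with rfl | ht
    · simpa [c] using hY'
    · nlinarith [mul_pos ht hX', mul_nonneg (sub_nonneg.2 ht1) hY'.le]
  have hdet := (rank_le_one_iff_det_eq_zero_fin_two _).1 hXY
  have hPsi : (Psi X - Psi Y).rank ≤ 1 := by
    rw [rank_le_one_iff_det_eq_zero_fin_two, det_Psi_sub_Psi hX'.ne' hY'.ne', hdet, neg_zero,
      zero_div]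
  set s := t * X 0 1 / c
  have hs : s ∈ Set.Icc (0 : ℝ) 1 :=
    ⟨by positivity, (div_le_one hc).2 (by nlinarith)⟩
  calc dualFn f (t • X + (1 - t) • Y) = c * f (s • Psi X + (1 - s) • Psi Y) := by
        have hZ : (t • X + (1 - t) • Y) 0 1 = c := by simp [c]
        rw [dualFn, hZ, Psi_smul_add_one_sub_smul hX'.ne' hY'.ne' hdet hc.ne']
    _ ≤ c * (s * f (Psi X) + (1 - s) * f (Psi Y)) :=
        mul_le_mul_of_nonneg_left
          (hf _ (mapsTo_Psi_Mplus hX) _ (mapsTo_Psi_Mplus hY) hPsi s hs) hc.le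
    _ = t * dualFn f X + (1 - t) * dualFn f Y := by
        simp only [dualFn, s]
        field_simp
        ring

end
end
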